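/- Fix an integer b ≥ 2 and let P(λ) = λ(λ+1)⋯(λ+b−1) − (b−1)!. Then: (i) P has exactly one root λ_1 in [0,∞), and λ_1 ∈ (0,1); (ii) all b complex roots of P are simple; (iii) every complex root λ' ≠ λ_1 of P satisfies Re(λ') < λ_1; (iv) P has no real roots in the interval (−(b−1), 0). -/

import Mathlib

open Real Filter Topology Set Polynomial



theorem my_le_choose : ∀ b : ℕ, ∀ j, 1 ≤ j → j < b → b ≤ Nat.choose b j := by
  intro b
  induction b with
  | zero => omega
  | succ n ih =>
    intro j h1 h2
    rcases eq_or_lt_of_le h1 with h | h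
    · rw [← h, Nat.choose_one_right]
    · rcases eq_or_lt_of_le (Nat.lt_succ_iff.mp h2) with h3 | h3
      · rw [h3, Nat.choose_succ_self_right]
      · obtain ⟨k, rfl⟩ : ∃ k, j = k + 1 := ⟨j - 1, by omega⟩
        rw [Nat.choose_succ_succ]
        have hk := ih k (by omega) (by omega)
        have hpos : 0 < Nat.choose n (k+1) := Nat.choose_pos (by omega)
        simp only [Nat.succ_eq_add_one] at *
        omega

theorem my_fact_le (b j : ℕ) (h1 : 1 ≤ j) (h2 : j < b) :
    Nat.factorial j * Nat.factorial (b - j) ≤ Nat.factorial (b - 1) := by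
  have hc := Nat.choose_mul_factorial_mul_factorial (le_of_lt h2)
  have hb : Nat.factorial b = b * Nat.factorial (b-1) := by
    have h : b - 1 + 1 = b := by omega
    conv_lhs => rw [← h]
    rw [Nat.factorial_succ, h]
  have hch := my_le_choose b j h1 h2
  have hm := Nat.mul_le_mul_right (Nat.factorial j * Nat.factorial (b - j)) hch
  rw [mul_assoc] at hc
  rw [hc, hb] at hm
  exact Nat.le_of_mul_le_mul_left hm (by omega)

theorem prod_shift2 : ∀ k : ℕ, (∏ i ∈ Finset.range k, (i + 2)) = Nat.factorial (k + 1) := by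
  intro k
  induction k with
  | zero => simp
  | succ n ih =>
    rw [Finset.prod_range_succ, ih, Nat.factorial_succ (n+1)]
    ring

theorem prod_sub (j : ℕ) : (∏ i ∈ Finset.range j, (j - i)) = Nat.factorial j := by
  have := Finset.prod_range_reflect (fun i => i + 1) j
  rw [← Finset.prod_range_add_one_eq_factorial j, ← this]
  apply Finset.prod_congr rfl
  intro i hi
  rw [Finset.mem_range] at hi
  omega

theorem my_mono (b : ℕ) (hb : 1 ≤ b) {x y : ℝ} (hx : 0 ≤ x) (hxy : x < y) :
    (∏ i ∈ Finset.range b, (x + i)) < ∏ i ∈ Finset.range b, (y + i) := by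
  rcases eq_or_lt_of_le hx with h | h
  · have h0 : (∏ i ∈ Finset.range b, (x + (i:ℝ))) = 0 := by
      apply Finset.prod_eq_zero (Finset.mem_range.mpr (by omega : 0 < b))
      simp [← h]
    rw [h0]
    apply Finset.prod_pos
    intro i _
    have : (0:ℝ) ≤ i := Nat.cast_nonneg i
    linarith
  · apply Finset.prod_lt_prod_of_nonempty
    · intro i _
      have : (0:ℝ) ≤ i := Nat.cast_nonneg i
      linarith
    · intro i _; linarith
    · exact Finset.nonempty_range_iff.mpr (by omega)

theorem my_bound (b : ℕ) (hb : 2 ≤ b) {x : ℝ} (h1 : -((b:ℝ)-1) < x) (h2 : x < 0) :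
    |∏ i ∈ Finset.range b, (x + i)| < (Nat.factorial (b-1) : ℝ) := by
  set j := ⌈-x⌉₊ with hjdef
  have hx0 : 0 < -x := by linarith
  have hj1 : 1 ≤ j := Nat.ceil_pos.mpr hx0
  have hcast : ((b-1:ℕ):ℝ) = (b:ℝ) - 1 := by
    push_cast [Nat.cast_sub (by omega : 1 ≤ b)]; ring
  have hjb1 : j ≤ b - 1 := Nat.ceil_le.mpr (by rw [hcast]; linarith)
  have hjb : j < b := by omega
  have hfl : -x ≤ (j:ℝ) := Nat.le_ceil _
  have hfu : (j:ℝ) < -x + 1 := Nat.ceil_lt_add_one hx0.le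
  have hf0 : 0 ≤ x + (j:ℝ) := by linarith
  have hf1 : x + (j:ℝ) < 1 := by linarith
  set h : ℕ → ℕ := fun i => if i < j then j - i else if i = j then 1 else i - j + 1 with hh
  have hprodh : (∏ i ∈ Finset.range b, h i) = Nat.factorial j * Nat.factorial (b - j) := by
    rw [Finset.range_eq_Ico, ← Finset.prod_Ico_consecutive _ (Nat.zero_le j) (le_of_lt hjb)]
    have hA : (∏ i ∈ Finset.Ico 0 j, h i) = Nat.factorial j := by
      rw [Nat.Ico_zero_eq_range, ← prod_sub j]
      apply Finset.prod_congr rfl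
      intro i hi
      rw [Finset.mem_range] at hi
      simp [hh, hi]
    have hB : (∏ i ∈ Finset.Ico j b, h i) = Nat.factorial (b - j) := by
      rw [Finset.prod_eq_prod_Ico_succ_bot hjb]
      have hjone : h j = 1 := by simp [hh]
      rw [hjone, one_mul, Finset.prod_Ico_eq_prod_range]
      have hc : ∀ i ∈ Finset.range (b - (j+1)), h (j+1+i) = i + 2 := by
        intro i _
        simp only [hh]
        rw [if_neg (by omega), if_neg (by omega)]
        omega
      rw [Finset.prod_congr rfl hc, prod_shift2]
      congr 1
      omega
    rw [hA, hB]
  set g : ℕ → ℝ := fun i => if i = j then x + (j:ℝ) else ((h i : ℕ) : ℝ) with hg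
  have hpoint : ∀ i ∈ Finset.range b, |x + (i:ℝ)| ≤ g i := by
    intro i _
    rcases lt_trichotomy i j with hij | hij | hij
    · have hgi : g i = ((j - i : ℕ) : ℝ) := by
        simp only [hg]; rw [if_neg (by omega)]; simp [hh, hij]
      have hcs : ((j - i : ℕ) : ℝ) = (j:ℝ) - i := by
        push_cast [Nat.cast_sub (le_of_lt hij)]; ring
      have hi1 : (i:ℝ) + 1 ≤ (j:ℝ) := by exact_mod_cast hij
      have hneg : x + (i:ℝ) < 0 := by linarith
      rw [hgi, hcs, abs_of_neg hneg]
      linarith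
    · rw [hij]
      simp only [hg, if_pos rfl]
      rw [abs_of_nonneg hf0]
    · have hgi : g i = ((i - j + 1 : ℕ) : ℝ) := by
        simp only [hg]; rw [if_neg (by omega)]; simp only [hh]
        rw [if_neg (by omega), if_neg (by omega)]
      have hcs : ((i - j + 1 : ℕ) : ℝ) = (i:ℝ) - j + 1 := by
        push_cast [Nat.cast_sub (le_of_lt hij)]; ring
      have hji : (j:ℝ) ≤ (i:ℝ) := by exact_mod_cast le_of_lt hij
      have hpos : 0 ≤ x + (i:ℝ) := by linarith
      rw [hgi, hcs, abs_of_nonneg hpos]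
      linarith
  have hprodg : (∏ i ∈ Finset.range b, g i) = (x + (j:ℝ)) * ((Nat.factorial j * Nat.factorial (b - j) : ℕ) : ℝ) := by
    have hjmem : j ∈ Finset.range b := Finset.mem_range.mpr hjb
    rw [← Finset.mul_prod_erase _ g hjmem]
    have hgj : g j = x + (j:ℝ) := by simp [hg]
    have hrest : (∏ i ∈ (Finset.range b).erase j, g i) = ∏ i ∈ (Finset.range b).erase j, ((h i : ℕ) : ℝ) := by
      apply Finset.prod_congr rfl
      intro i hi
      have : i ≠ j := Finset.ne_of_mem_erase hi
      simp [hg, this]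
    rw [hgj, hrest, ← Nat.cast_prod]
    rw [Finset.prod_erase _ (by simp [hh] : h j = 1), hprodh]
  calc |∏ i ∈ Finset.range b, (x + (i:ℝ))|
      = ∏ i ∈ Finset.range b, |x + (i:ℝ)| := Finset.abs_prod _ _
    _ ≤ ∏ i ∈ Finset.range b, g i :=
        Finset.prod_le_prod (fun i _ => abs_nonneg _) hpoint
    _ = (x + (j:ℝ)) * ((Nat.factorial j * Nat.factorial (b - j) : ℕ) : ℝ) := hprodg
    _ ≤ (x + (j:ℝ)) * ((Nat.factorial (b-1) : ℕ) : ℝ) := by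
        apply mul_le_mul_of_nonneg_left _ hf0
        exact_mod_cast my_fact_le b j hj1 hjb
    _ < (Nat.factorial (b-1) : ℝ) := by
        apply mul_lt_of_lt_one_left _ hf1
        exact_mod_cast Nat.factorial_pos (b-1)

open Real Filter Topology Set Polynomial

theorem my_derivative_prod {R : Type*} [CommRing R] {s : Finset ℕ} {f : ℕ → Polynomial R} :
    Polynomial.derivative (∏ i ∈ s, f i) =
      ∑ i ∈ s, (∏ j ∈ s.erase i, f j) * Polynomial.derivative (f i) := by
  classical
  induction s using Finset.induction_on with
  | empty => simp
  | insert _ _ ha ih =>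
    rename_i a s
    rw [Finset.prod_insert ha, derivative_mul, ih, Finset.sum_insert ha,
      Finset.erase_insert ha, Finset.mul_sum]
    congr 1
    · ring
    · apply Finset.sum_congr rfl
      intro i hi
      have hia : i ≠ a := by rintro rfl; exact ha hi
      rw [Finset.erase_insert_of_ne (Ne.symm hia),
        Finset.prod_insert (fun h => ha (Finset.mem_of_mem_erase h))]
      ring


/-- Properties of the roots of the characteristic polynomial
`P(λ) = λ(λ+1)⋯(λ+b−1) − (b−1)!` of the `b`-ary model: there is a unique nonnegative real
root `λ₁ ∈ (0,1)`; all complex roots are simple; every other complex root has real part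
less than `λ₁`; and there are no real roots in `(−(b−1), 0)`. -/
theorem stmt19 (b : ℕ) (hb : 2 ≤ b) :
    ∃ lam1 : ℝ, 0 < lam1 ∧ lam1 < 1 ∧
      (∏ i ∈ Finset.range b, (lam1 + i)) = (Nat.factorial (b - 1) : ℝ) ∧
      (∀ x : ℝ, 0 ≤ x →
        (∏ i ∈ Finset.range b, (x + i)) = (Nat.factorial (b - 1) : ℝ) → x = lam1) ∧
      (∀ z : ℂ, (∏ i ∈ Finset.range b, (z + i)) = (Nat.factorial (b - 1) : ℂ) →
        Polynomial.eval z (Polynomial.derivative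
          ((∏ i ∈ Finset.range b, (Polynomial.X + Polynomial.C (i : ℂ))) -
            Polynomial.C ((Nat.factorial (b - 1) : ℂ)))) ≠ 0) ∧
      (∀ z : ℂ, (∏ i ∈ Finset.range b, (z + i)) = (Nat.factorial (b - 1) : ℂ) →
        z ≠ (lam1 : ℂ) → z.re < lam1) ∧
      (∀ x : ℝ, -((b : ℝ) - 1) < x → x < 0 →
        (∏ i ∈ Finset.range b, (x + i)) ≠ (Nat.factorial (b - 1) : ℝ)) := by
  have hcpos : (0:ℝ) < (Nat.factorial (b-1) : ℝ) := by
    exact_mod_cast Nat.factorial_pos (b-1)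
  have hne : (Finset.range b).Nonempty := Finset.nonempty_range_iff.mpr (by omega)
  -- cast lemma
  have hcast : ∀ x : ℝ, (∏ i ∈ Finset.range b, ((x:ℂ) + (i:ℕ))) =
      (((∏ i ∈ Finset.range b, (x + (i:ℝ))) : ℝ) : ℂ) := by
    intro x
    push_cast
    rfl
  -- continuity
  have hcont : Continuous (fun x : ℝ => ∏ i ∈ Finset.range b, (x + (i:ℝ))) := by
    apply continuous_finset_prod
    intro i _
    exact continuous_id.add continuous_const
  -- values at 0 and 1
  have hval0 : (∏ i ∈ Finset.range b, ((0:ℝ) + (i:ℝ))) = 0 := by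
    apply Finset.prod_eq_zero (Finset.mem_range.mpr (by omega : 0 < b))
    simp
  have hval1 : (∏ i ∈ Finset.range b, ((1:ℝ) + (i:ℝ))) = (Nat.factorial b : ℝ) := by
    rw [← Finset.prod_range_add_one_eq_factorial b]
    push_cast
    apply Finset.prod_congr rfl
    intro i _
    ring
  have hfactlt : (Nat.factorial (b-1) : ℝ) < (Nat.factorial b : ℝ) := by
    have hfb : Nat.factorial b = b * Nat.factorial (b-1) := by
      have h : b - 1 + 1 = b := by omega
      conv_lhs => rw [← h]
      rw [Nat.factorial_succ, h]
    rw [hfb]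
    push_cast
    have h2 : (2:ℝ) ≤ (b:ℝ) := by exact_mod_cast hb
    have h3 := mul_le_mul_of_nonneg_right h2 hcpos.le
    linarith
  -- existence of lam1
  have hmem2 : (Nat.factorial (b-1) : ℝ) ∈ Set.Ioo
      ((fun x : ℝ => ∏ i ∈ Finset.range b, (x + (i:ℝ))) 0)
      ((fun x : ℝ => ∏ i ∈ Finset.range b, (x + (i:ℝ))) 1) := by
    show (Nat.factorial (b-1) : ℝ) ∈ Set.Ioo
      (∏ i ∈ Finset.range b, ((0:ℝ) + (i:ℝ))) (∏ i ∈ Finset.range b, ((1:ℝ) + (i:ℝ)))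
    rw [hval0, hval1]
    exact ⟨hcpos, hfactlt⟩
  obtain ⟨lam1, hlammem, hlameq⟩ :=
    intermediate_value_Ioo (by norm_num : (0:ℝ) ≤ 1) hcont.continuousOn hmem2
  obtain ⟨hlam0, hlam1⟩ := hlammem
  simp only at hlameq
  -- dichotomy for real roots
  have hdich : ∀ x : ℝ, (∏ i ∈ Finset.range b, (x + (i:ℝ))) = (Nat.factorial (b-1) : ℝ) →
      0 < x ∨ x + ((b:ℝ)-1) < 0 := by
    intro x hx
    by_contra hcon
    push_neg at hcon
    obtain ⟨hx1, hx2⟩ := hcon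
    rcases eq_or_lt_of_le hx1 with h | h
    · rw [h, hval0] at hx
      linarith
    · rcases eq_or_lt_of_le hx2 with h2 | h2
      · have hmem : b - 1 ∈ Finset.range b := Finset.mem_range.mpr (by omega)
        have hzero : x + ((b-1:ℕ):ℝ) = 0 := by
          have : ((b-1:ℕ):ℝ) = (b:ℝ) - 1 := by
            push_cast [Nat.cast_sub (by omega : 1 ≤ b)]; ring
          rw [this]; linarith
        have : (∏ i ∈ Finset.range b, (x + (i:ℝ))) = 0 :=
          Finset.prod_eq_zero hmem hzero
        rw [this] at hx
        linarith
      · have := my_bound b hb (by linarith) h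
        rw [hx, abs_of_pos hcpos] at this
        linarith
  refine ⟨lam1, hlam0, hlam1, hlameq, ?_, ?_, ?_, ?_⟩
  · -- uniqueness
    intro x hx hxeq
    by_contra hxne
    rcases lt_or_gt_of_ne hxne with h | h
    · have := my_mono b (by omega) hx h
      rw [hxeq, hlameq] at this
      exact lt_irrefl _ this
    · have := my_mono b (by omega) (le_of_lt hlam0) h
      rw [hxeq, hlameq] at this
      exact lt_irrefl _ this
  · -- simple roots
    intro z hz
    have hcne : ((Nat.factorial (b-1) : ℂ)) ≠ 0 :=
      Nat.cast_ne_zero.mpr (Nat.factorial_ne_zero _)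
    have hzne : ∀ i ∈ Finset.range b, (z + (i:ℕ)) ≠ 0 := by
      intro i hi h0
      exact hcne (hz ▸ Finset.prod_eq_zero hi h0)
    have hD : Polynomial.eval z (Polynomial.derivative
        ((∏ i ∈ Finset.range b, (Polynomial.X + Polynomial.C (i:ℂ))) -
          Polynomial.C ((Nat.factorial (b-1) : ℂ))))
        = ∑ i ∈ Finset.range b, ∏ k ∈ (Finset.range b).erase i, (z + (k:ℕ)) := by
      rw [derivative_sub, derivative_C, sub_zero, my_derivative_prod,
        Polynomial.eval_finset_sum]
      apply Finset.sum_congr rfl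
      intro i _
      rw [Polynomial.derivative_X_add_C, mul_one, Polynomial.eval_prod]
      apply Finset.prod_congr rfl
      intro k _
      rw [Polynomial.eval_add, Polynomial.eval_X, Polynomial.eval_C]
    have hterm : ∀ i ∈ Finset.range b, (∏ k ∈ (Finset.range b).erase i, (z + (k:ℕ)))
        = (Nat.factorial (b-1) : ℂ) * (z + (i:ℕ))⁻¹ := by
      intro i hi
      have hpe := Finset.mul_prod_erase (Finset.range b) (fun k => z + (k:ℕ)) hi
      rw [hz] at hpe
      rw [eq_mul_inv_iff_mul_eq₀ (hzne i hi), mul_comm]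
      exact hpe
    rw [hD, Finset.sum_congr rfl hterm, ← Finset.mul_sum]
    apply mul_ne_zero hcne
    -- S ≠ 0
    have hnormpos : ∀ i ∈ Finset.range b, 0 < Complex.normSq (z + (i:ℕ)) :=
      fun i hi => Complex.normSq_pos.mpr (hzne i hi)
    by_cases hy : z.im = 0
    · -- z real
      have hzz : z = ((z.re : ℝ) : ℂ) := Complex.ext rfl (by simp [hy])
      have hxprod : (∏ i ∈ Finset.range b, (z.re + (i:ℝ))) = (Nat.factorial (b-1) : ℝ) := by
        have h' := hz
        rw [hzz, hcast z.re] at h'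
        exact_mod_cast h'
      intro hS
      have hre := congrArg Complex.re hS
      rw [Complex.re_sum, Complex.zero_re] at hre
      have hterm_re : ∀ i : ℕ, ((z + (i:ℕ))⁻¹).re = (z.re + (i:ℝ)) / Complex.normSq (z + (i:ℕ)) := by
        intro i
        have h2 : (z + (i:ℕ)).re = z.re + (i:ℝ) := by simp
        rw [Complex.inv_re, h2]
      rcases hdich z.re hxprod with hpos | hneg
      · have : 0 < ∑ i ∈ Finset.range b, ((z + (i:ℕ))⁻¹).re := by
          apply Finset.sum_pos _ hne
          intro i hi
          rw [hterm_re i]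
          apply div_pos _ (hnormpos i hi)
          have : (0:ℝ) ≤ i := Nat.cast_nonneg i
          linarith
        linarith
      · have : (∑ i ∈ Finset.range b, ((z + (i:ℕ))⁻¹).re) < 0 := by
          have hlt : ∀ i ∈ Finset.range b, ((z + (i:ℕ))⁻¹).re < 0 := by
            intro i hi
            rw [hterm_re i]
            apply div_neg_of_neg_of_pos _ (hnormpos i hi)
            have hib : (i:ℝ) ≤ (b:ℝ) - 1 := by
              have : i ≤ b - 1 := by
                have := Finset.mem_range.mp hi; omega
              calc (i:ℝ) ≤ ((b-1:ℕ):ℝ) := by exact_mod_cast this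
                _ = (b:ℝ) - 1 := by push_cast [Nat.cast_sub (by omega : 1 ≤ b)]; ring
            linarith
          calc (∑ i ∈ Finset.range b, ((z + (i:ℕ))⁻¹).re)
              < ∑ i ∈ Finset.range b, (0:ℝ) := Finset.sum_lt_sum_of_nonempty hne hlt
            _ = 0 := Finset.sum_const_zero
        linarith
    · -- z not real
      intro hS
      have him := congrArg Complex.im hS
      rw [Complex.im_sum, Complex.zero_im] at him
      have hterm_im : ∀ i : ℕ, ((z + (i:ℕ))⁻¹).im = -z.im * (Complex.normSq (z + (i:ℕ)))⁻¹ := by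
        intro i
        rw [Complex.inv_im]
        have : (z + (i:ℕ)).im = z.im := by simp
        rw [this, div_eq_mul_inv]
      rw [Finset.sum_congr rfl (fun i _ => hterm_im i), ← Finset.mul_sum] at him
      have hsumpos : 0 < ∑ i ∈ Finset.range b, (Complex.normSq (z + (i:ℕ)))⁻¹ := by
        apply Finset.sum_pos _ hne
        intro i hi
        exact inv_pos.mpr (hnormpos i hi)
      have := mul_ne_zero (neg_ne_zero.mpr hy) (ne_of_gt hsumpos)
      exact this him
  · -- real part strictly less
    intro z hz hzne
    by_contra hre
    push_neg at hre
    have habs : (∏ i ∈ Finset.range b, ‖z + (i:ℕ)‖) = (Nat.factorial (b-1) : ℝ) := by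
      rw [← norm_prod, hz, Complex.norm_natCast]
    by_cases hy : z.im = 0
    · have hzz : z = ((z.re : ℝ) : ℂ) := Complex.ext rfl (by simp [hy])
      have hxprod : (∏ i ∈ Finset.range b, (z.re + (i:ℝ))) = (Nat.factorial (b-1) : ℝ) := by
        have h' := hz
        rw [hzz, hcast z.re] at h'
        exact_mod_cast h'
      have hxne : z.re ≠ lam1 := by
        intro h
        exact hzne (by rw [hzz, h])
      have hxgt : lam1 < z.re := lt_of_le_of_ne hre (Ne.symm hxne)
      have := my_mono b (by omega) (le_of_lt hlam0) hxgt
      rw [hlameq, hxprod] at this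
      exact lt_irrefl _ this
    · have hlt : (∏ i ∈ Finset.range b, (lam1 + (i:ℝ))) <
          ∏ i ∈ Finset.range b, ‖z + (i:ℕ)‖ := by
        apply Finset.prod_lt_prod
        · intro i _
          have : (0:ℝ) ≤ i := Nat.cast_nonneg i
          linarith
        · intro i _
          have h1 : lam1 + (i:ℝ) ≤ (z + (i:ℕ)).re := by
            simp only [Complex.add_re, Complex.natCast_re]
            linarith
          exact h1.trans (Complex.re_le_norm _)
        · refine ⟨0, Finset.mem_range.mpr (by omega), ?_⟩
          have h1 : z.re < ‖z‖ := by
            have hsq : ‖z‖^2 = z.re^2 + z.im^2 := by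
              rw [Complex.sq_norm, Complex.normSq_apply]; ring
            have him2 : 0 < z.im^2 := by positivity
            nlinarith [norm_nonneg z, Complex.re_le_norm z]
          simpa using lt_of_le_of_lt hre h1
      rw [hlameq, habs] at hlt
      exact lt_irrefl _ hlt
  · -- no roots in (-(b-1), 0)
    intro x hx1 hx2 hx3
    have := my_bound b hb hx1 hx2
    rw [hx3, abs_of_pos hcpos] at this
    exact lt_irrefl _ this
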